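/- For every α ∈ (0,2) and every s > 0, the function γ satisfies 0 ≤ γ(s) ≤ (2·√(2α)·(2−α)/(α·π))·s^α. -/

import Mathlib

/-!
The exponential factor of `γ(s)` is at most `1`: for `u = rs ≥ 0` and `α ≤ 2` the quotient
`(1 - u^α) / (1 - u^2)` lies in `[0, 1]`, so the exponent is nonpositive. The rational factor
has denominator `(s^α - cos θ)^2 + sin^2 θ` with `θ = απ/2`. For `α ≤ 1` it is at least `sin^2 θ`
and `sin θ ≥ α` (Jordan's inequality); for `α ≥ 1` we have `cos θ ≤ 0`, so it is at least `1`,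
while `sin θ = sin((2 - α)π/2) ≤ (2 - α)π/2`.
-/

open MeasureTheory Real Set
open scoped ENNReal NNReal

/-- The density `γ` from Kwaśnicki's formula for eigenfunctions on the half-line;
the integrand in the exponent has a removable singularity at `r = 1/s` (a single point,
hence negligible for the Lebesgue integral). -/
noncomputable def gammaFn (α : ℝ) (s : ℝ) : ℝ :=
  Real.sqrt (2 * α) * Real.sin (α * π / 2) / (2 * π) *
      (s ^ α / (1 + s ^ (2 * α) - 2 * s ^ α * Real.cos (α * π / 2))) *
    Real.exp ((1 / π) * ∫ r in Set.Ioi (0 : ℝ),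
      (1 + r ^ 2)⁻¹ * Real.log ((1 - r ^ α * s ^ α) / (1 - r ^ 2 * s ^ 2)))

/-- `G` is the Laplace transform of `γ`. -/
noncomputable def GFn (α : ℝ) (s : ℝ) : ℝ :=
  ∫ t in Set.Ioi (0 : ℝ), Real.exp (-s * t) * gammaFn α t

/-- The generalized eigenfunction profile on the half-line:
`F(s) = sin(s + (2−α)π/8) − G(s)` for `s > 0`, and `F(s) = 0` for `s ≤ 0`. -/
noncomputable def FFn (α : ℝ) (s : ℝ) : ℝ :=
  if 0 < s then Real.sin (s + (2 - α) * π / 8) - GFn α s else 0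

/-- The auxiliary cut-off function `q`. -/
noncomputable def qFn (x : ℝ) : ℝ :=
  if x ≤ -(1/3) then 0
  else if x ≤ 0 then 9/2 * (x + 1/3) ^ 2
  else if x ≤ 1/3 then 1 - 9/2 * (x - 1/3) ^ 2
  else 1

/-- `μ_n = nπ/2 − (2−α)π/8`. -/
noncomputable def muN (α : ℝ) (n : ℕ) : ℝ := n * π / 2 - (2 - α) * π / 8

/-- The approximate eigenfunction
`φ̃_n(x) = q(−x)·F(μ_n(1+x)) + (−1)^n·q(x)·F(μ_n(1−x))`. -/
noncomputable def phiTilde (α : ℝ) (n : ℕ) (x : ℝ) : ℝ :=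
  qFn (-x) * FFn α (muN α n * (1 + x)) + (-1 : ℝ) ^ n * qFn x * FFn α (muN α n * (1 - x))

theorem div_one_sub_rpow_mem_Icc {a b u : ℝ} (ha : 0 ≤ a) (hab : a ≤ b) (hu : 0 ≤ u) :
    (1 - u ^ a) / (1 - u ^ b) ∈ Icc 0 1 := by
  rcases le_total u 1 with hu1 | hu1
  · have hba : u ^ b ≤ u ^ a := rpow_le_rpow_of_exponent_ge' hu hu1 ha hab
    have ha1 : u ^ a ≤ 1 := rpow_le_one hu hu1 ha
    exact ⟨div_nonneg (by linarith) (by linarith), div_le_one_of_le₀ (by linarith) (by linarith)⟩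
  · have hab' : u ^ a ≤ u ^ b := rpow_le_rpow_of_exponent_le hu1 hab
    have ha1 : 1 ≤ u ^ a := one_le_rpow hu1 ha
    exact ⟨div_nonneg_of_nonpos (by linarith) (by linarith),
      div_le_one_of_ge (by linarith) (by linarith)⟩

/-- The quotient is `0 / 0 = 0` at the removable singularity `r = 1 / s`, so the integrand is
nonpositive everywhere on `(0, ∞)`. -/
theorem gammaFn_exponent_nonpos {α s : ℝ} (hα : α ∈ Icc (0 : ℝ) 2) (hs : 0 ≤ s) :
    ∫ r in Ioi (0 : ℝ), (1 + r ^ 2)⁻¹ * log ((1 - r ^ α * s ^ α) / (1 - r ^ 2 * s ^ 2)) ≤ 0 := by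
  refine setIntegral_nonpos measurableSet_Ioi fun r (hr : 0 < r) => ?_
  have hrs : 0 ≤ r * s := mul_nonneg hr.le hs
  have hq := div_one_sub_rpow_mem_Icc hα.1 hα.2 hrs
  rw [rpow_two] at hq
  rw [← mul_rpow hr.le hs, ← mul_pow]
  exact mul_nonpos_of_nonneg_of_nonpos (by positivity) (log_nonpos hq.1 hq.2)

theorem one_add_sq_sub_two_mul_cos (y θ : ℝ) :
    1 + y ^ 2 - 2 * y * cos θ = (y - cos θ) ^ 2 + sin θ ^ 2 := by
  linear_combination -sin_sq_add_cos_sq θ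

theorem sin_mul_pi_div_two_le (α : ℝ) (hα : α ≤ 2) : sin (α * π / 2) ≤ (2 - α) * π / 2 := by
  rw [← sin_pi_sub, show π - α * π / 2 = (2 - α) * π / 2 by ring]
  exact sin_le (by nlinarith [pi_pos])

theorem mul_sin_le_four_mul {α y : ℝ} (hα : α ∈ Icc (0 : ℝ) 2) (hy : 0 ≤ y) :
    α * sin (α * π / 2) ≤ 4 * (2 - α) * (1 + y ^ 2 - 2 * y * cos (α * π / 2)) := by
  obtain ⟨hα0, hα2⟩ := hα
  have hS : 0 ≤ sin (α * π / 2) :=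
    sin_nonneg_of_nonneg_of_le_pi (by positivity) (by nlinarith [pi_pos])
  rw [one_add_sq_sub_two_mul_cos]
  rcases le_total α 1 with hα1 | hα1
  · have hαS : α ≤ sin (α * π / 2) := by
      have := mul_le_sin (x := α * π / 2) (by positivity) (by nlinarith [pi_pos])
      rwa [show 2 / π * (α * π / 2) = α by field_simp] at this
    nlinarith [sq_nonneg (y - cos (α * π / 2))]
  · -- for `α ≥ 1` the cosine is nonpositive, so the quadratic in `y` is at least `1` on `y ≥ 0`
    have hc : cos (α * π / 2) ≤ 0 :=
      cos_nonpos_of_pi_div_two_le_of_le (by nlinarith [pi_pos]) (by nlinarith [pi_pos])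
    have hD : 1 ≤ (y - cos (α * π / 2)) ^ 2 + sin (α * π / 2) ^ 2 := by
      nlinarith [sin_sq_add_cos_sq (α * π / 2), mul_nonneg hy (neg_nonneg.mpr hc)]
    nlinarith [sin_mul_pi_div_two_le α hα2, pi_le_four]

theorem gammaFn_prefactor_bounds {α y : ℝ} (hα : α ∈ Ioo (0 : ℝ) 2) (hy : 0 < y) :
    0 ≤ √(2 * α) * sin (α * π / 2) / (2 * π) * (y / (1 + y ^ 2 - 2 * y * cos (α * π / 2))) ∧
    √(2 * α) * sin (α * π / 2) / (2 * π) * (y / (1 + y ^ 2 - 2 * y * cos (α * π / 2))) ≤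
      2 * √(2 * α) * (2 - α) / (α * π) * y := by
  obtain ⟨hα0, hα2⟩ := hα
  have hS : 0 < sin (α * π / 2) := sin_pos_of_pos_of_lt_pi (by positivity) (by nlinarith [pi_pos])
  have hD : 0 < 1 + y ^ 2 - 2 * y * cos (α * π / 2) := by
    rw [one_add_sq_sub_two_mul_cos]; positivity
  have key : sin (α * π / 2) / (2 * π) / (1 + y ^ 2 - 2 * y * cos (α * π / 2)) ≤
      2 * (2 - α) / (α * π) := by
    rw [div_div, div_le_div_iff₀ (by positivity) (by positivity)]
    nlinarith [mul_sin_le_four_mul ⟨hα0.le, hα2.le⟩ hy.le, pi_pos]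
  refine ⟨by positivity, ?_⟩
  calc √(2 * α) * sin (α * π / 2) / (2 * π) * (y / (1 + y ^ 2 - 2 * y * cos (α * π / 2)))
      = √(2 * α) * y * (sin (α * π / 2) / (2 * π) / (1 + y ^ 2 - 2 * y * cos (α * π / 2))) := by
        ring
    _ ≤ √(2 * α) * y * (2 * (2 - α) / (α * π)) := mul_le_mul_of_nonneg_left key (by positivity)
    _ = 2 * √(2 * α) * (2 - α) / (α * π) * y := by ring

theorem gammaFn_bounds (α : ℝ) (hα : α ∈ Set.Ioo (0 : ℝ) 2) (s : ℝ) (hs : 0 < s) :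
    0 ≤ gammaFn α s ∧
    gammaFn α s ≤ 2 * Real.sqrt (2 * α) * (2 - α) / (α * π) * s ^ α := by
  have hsq : s ^ (2 * α) = (s ^ α) ^ 2 := by rw [mul_comm, rpow_mul hs.le, rpow_two]
  have hexp := exp_le_one_iff.mpr <|
    mul_nonpos_of_nonneg_of_nonpos (one_div_nonneg.mpr pi_pos.le) <|
      gammaFn_exponent_nonpos (Ioo_subset_Icc_self hα) hs.le
  obtain ⟨hP0, hP⟩ := gammaFn_prefactor_bounds hα (rpow_pos_of_pos hs α)
  unfold gammaFn
  rw [hsq]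
  exact ⟨mul_nonneg hP0 (exp_nonneg _), (mul_le_of_le_one_right hP0 hexp).trans hP⟩
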